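/- arXiv:2401.07548 — 7 statements merged into one kernel-verified Lean document; each statement's English description precedes it below -/
import Mathlib

section
/- Define U(ℓ,h) by the recurrence U(ℓ,0) = 2^ℓ for all ℓ ≥ 0, U(0,h) satisfies U(0,h) ≤ h·U(0,h-1) + 1 for h ≥ 1 with U(0,0)=1, and U(ℓ,h) = 2·U(ℓ-1,h) + h·U(ℓ,h-1) + 1 for ℓ,h ≥ 1. Then for all ℓ, h ≥ 0 with h ≥ 1, U(ℓ,h) ≤ 4^ℓ · 2^h · h · h!. -/
/-- the leaf-count recurrence `U` of the colourful universal tree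
satisfies `U ℓ h ≤ 4^ℓ · 2^h · h · h!` for all `ℓ ≥ 0`, `h ≥ 1`. -/
theorem stmt0 (U : ℕ → ℕ → ℕ)
    (h₀ : ∀ ℓ, U ℓ 0 = 2 ^ ℓ)
    (h₁ : U 0 0 = 1)
    (h₂ : ∀ h, 1 ≤ h → U 0 h ≤ h * U 0 (h - 1) + 1)
    (h₃ : ∀ ℓ h, 1 ≤ ℓ → 1 ≤ h →
      U ℓ h = 2 * U (ℓ - 1) h + h * U ℓ (h - 1) + 1) :
    ∀ ℓ h, 1 ≤ h → U ℓ h ≤ 4 ^ ℓ * 2 ^ h * h * Nat.factorial h := by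
  intro ℓ
  induction ℓ with
  | zero =>
    intro h hh
    induction h with
    | zero => omega
    | succ n ih =>
      have key := h₂ (n + 1) (by omega)
      simp only [Nat.add_sub_cancel] at key
      rcases Nat.eq_zero_or_pos n with hn | hn
      · subst hn
        simp [h₁, Nat.factorial] at key ⊢
        omega
      · have ihn := ih hn
        calc U 0 (n + 1) ≤ (n + 1) * U 0 n + 1 := key
          _ ≤ (n + 1) * (4 ^ 0 * 2 ^ n * n * Nat.factorial n) + 1 :=
            Nat.add_le_add_right (Nat.mul_le_mul_left _ ihn) 1
          _ ≤ 4 ^ 0 * 2 ^ (n + 1) * (n + 1) * Nat.factorial (n + 1) := by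
            have hf : 1 ≤ Nat.factorial n := Nat.one_le_iff_ne_zero.mpr (Nat.factorial_ne_zero n)
            simp only [pow_zero, one_mul, pow_succ, Nat.factorial_succ]
            nlinarith [Nat.one_le_two_pow (n := n)]
  | succ L ihL =>
    intro h hh
    induction h with
    | zero => omega
    | succ n ih =>
      have key := h₃ (L + 1) (n + 1) (by omega) (by omega)
      simp only [Nat.add_sub_cancel] at key
      have prev : U L (n + 1) ≤ 4 ^ L * 2 ^ (n + 1) * (n + 1) * Nat.factorial (n + 1) :=
        ihL (n + 1) (by omega)
      rcases Nat.eq_zero_or_pos n with hn | hn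
      · subst hn
        rw [h₀ (L + 1)] at key
        simp [Nat.factorial] at key prev ⊢
        have hp : 2 ^ (L + 1) + 1 ≤ 4 ^ (L + 1) := by
          have : 2 ^ (L + 1) < 4 ^ (L + 1) :=
            Nat.pow_lt_pow_left (by norm_num) (by omega)
          omega
        have e4 : (4:ℕ) ^ (L + 1) = 4 * 4 ^ L := by ring
        omega
      · have ihn := ih hn
        calc U (L + 1) (n + 1)
            = 2 * U L (n + 1) + (n + 1) * U (L + 1) n + 1 := key
          _ ≤ 2 * (4 ^ L * 2 ^ (n + 1) * (n + 1) * Nat.factorial (n + 1))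
              + (n + 1) * (4 ^ (L + 1) * 2 ^ n * n * Nat.factorial n) + 1 := by
            have a := Nat.mul_le_mul_left (n + 1) ihn
            have b := Nat.mul_le_mul_left 2 prev
            omega
          _ = 4 ^ (L + 1) * 2 ^ n * (n + 1) * Nat.factorial (n + 1)
              + 4 ^ (L + 1) * 2 ^ n * n * Nat.factorial (n + 1) + 1 := by
            have efact : Nat.factorial (n + 1) = (n + 1) * Nat.factorial n := rfl
            rw [efact]; ring
          _ ≤ 4 ^ (L + 1) * 2 ^ (n + 1) * (n + 1) * Nat.factorial (n + 1) := by
            have hone : 1 ≤ 4 ^ (L + 1) * 2 ^ n * Nat.factorial (n + 1) :=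
              Nat.one_le_iff_ne_zero.mpr (by positivity)
            have eq1 : 4 ^ (L + 1) * 2 ^ (n + 1) * (n + 1) * Nat.factorial (n + 1)
                = 4 ^ (L + 1) * 2 ^ n * (n + 1) * Nat.factorial (n + 1)
                + 4 ^ (L + 1) * 2 ^ n * n * Nat.factorial (n + 1)
                + 4 ^ (L + 1) * 2 ^ n * Nat.factorial (n + 1) := by ring
            omega
end

section
/- Let ρ = t₀, t₁, t₂, … be an infinite sequence of nodes in a finite labelled tree (nodes being finite sequences over a linearly ordered set, ordered by: n₁ ≺ n₂ iff n₁ is a strict prefix of n₂ or n₁ is lexicographically smaller). Suppose for all j, either t_j ≻ t_{j+1} or t_j is a prefix of t_{j+1}. Then the ≺-minimal node t_inf among those occurring infinitely often in ρ is a prefix (ancestor) of t_i for all but finitely many i. -/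
/-- The order `≺` on nodes of a labelled tree: `n₁ ≺ n₂` iff `n₁` is a strict
prefix of `n₂`, or `n₁` is lexicographically strictly smaller than `n₂`. -/
def nlt {α : Type*} [LinearOrder α] (l₁ l₂ : List α) : Prop :=
  (l₁ <+: l₂ ∧ l₁ ≠ l₂) ∨ List.Lex (· < ·) l₁ l₂

lemma lex_of_prefix {α : Type*} [LinearOrder α] :
    ∀ {l₁ l₂ : List α}, l₁ <+: l₂ → l₁ ≠ l₂ → List.Lex (· < ·) l₁ l₂
  | [], [], _, h => absurd rfl h
  | [], _ :: _, _, _ => List.Lex.nil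
  | a :: t₁, l₂, hp, hne => by
    obtain ⟨s, rfl⟩ := hp
    exact List.Lex.cons (lex_of_prefix ⟨s, rfl⟩ (fun h => hne (by rw [List.cons_append]; exact congrArg (a :: ·) h)))

lemma prefix_of_between {α : Type*} [LinearOrder α] :
    ∀ (a b c : List α), a <+: c → ¬ List.Lex (· < ·) b a →
      List.Lex (· < ·) b c → a <+: b
  | [], b, c, _, _, _ => List.nil_prefix
  | x :: a', b, c, hac, hba, hbc => by
    obtain ⟨s, rfl⟩ := hac
    match b, hbc with
    | [], _ => exact absurd List.Lex.nil hba
    | y :: b', hbc =>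
      cases hbc with
      | rel h => exact absurd (List.Lex.rel h) hba
      | cons h =>
        exact List.cons_prefix_cons.mpr ⟨rfl,
          prefix_of_between a' b' (a' ++ s) ⟨s, rfl⟩
            (fun hh => hba (List.Lex.cons hh)) h⟩

/-- if `ρ` is an infinite sequence of nodes of a finite labelled
tree such that each step either strictly decreases in `≺` or moves to a
descendant, then the `≺`-minimal node `tinf` occurring infinitely often in `ρ`
is a prefix (ancestor) of `ρ i` for all but finitely many `i`. -/
theorem stmt4 {α : Type*} [LinearOrder α] (ρ : ℕ → List α)
    (hfin : (Set.range ρ).Finite)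
    (hstep : ∀ j, nlt (ρ (j + 1)) (ρ j) ∨ ρ j <+: ρ (j + 1))
    (tinf : List α)
    (hinf : ∀ N, ∃ i ≥ N, ρ i = tinf)
    (hmin : ∀ s, (∀ N, ∃ i ≥ N, ρ i = s) → ¬ nlt s tinf) :
    ∃ N, ∀ i ≥ N, tinf <+: ρ i := by
  classical
  have hnlt : ∀ l₁ l₂ : List α, nlt l₁ l₂ ↔ List.Lex (· < ·) l₁ l₂ := by
    intro l₁ l₂
    constructor
    · rintro (⟨hp, hne⟩ | h)
      · exact lex_of_prefix hp hne
      · exact h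
    · exact Or.inr
  have hchoice : ∀ v : List α, ∃ N, ¬ (∀ M, ∃ i ≥ M, ρ i = v) →
      ∀ i ≥ N, ρ i ≠ v := by
    intro v
    by_cases h : ∀ M, ∃ i ≥ M, ρ i = v
    · exact ⟨0, fun h' => absurd h h'⟩
    · push_neg at h
      obtain ⟨N, hN⟩ := h
      exact ⟨N, fun _ => hN⟩
  choose f hf using hchoice
  obtain ⟨N₀, hN₀⟩ : ∃ N₀, ∀ v ∈ Set.range ρ, f v < N₀ := by
    obtain ⟨B, hB⟩ := (hfin.image f).bddAbove
    exact ⟨B + 1, fun v hv => Nat.lt_succ_of_le (hB ⟨v, hv, rfl⟩)⟩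
  have hPinf : ∀ i ≥ N₀, ∀ M, ∃ k ≥ M, ρ k = ρ i := by
    intro i hi
    by_contra h
    exact hf (ρ i) h i (le_of_lt (lt_of_lt_of_le (hN₀ _ ⟨i, rfl⟩) hi)) rfl
  obtain ⟨i₀, hi₀N, hi₀⟩ := hinf N₀
  refine ⟨i₀, ?_⟩
  intro i hi
  induction i, hi using Nat.le_induction with
  | base => exact hi₀ ▸ List.prefix_rfl
  | succ n hn ih =>
    rcases hstep n with h | h
    · have hlex : List.Lex (· < ·) (ρ (n + 1)) (ρ n) := (hnlt _ _).mp h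
      have h1 : ¬ List.Lex (· < ·) (ρ (n + 1)) tinf := fun hc =>
        hmin (ρ (n + 1)) (hPinf (n + 1) (by omega)) ((hnlt _ _).mpr hc)
      exact prefix_of_between tinf (ρ (n + 1)) (ρ n) ih h1 hlex
    · exact ih.trans h
end

section
/- Let ρ = t₀, t₁, t₂, … be an infinite sequence of nodes of a finite labelled tree such that for each j, either t_j ≻ t_{j+1} or t_j is a prefix of t_{j+1}. Then the ≺-minimal node t_inf occurring infinitely often in ρ satisfies: for infinitely many indices i, t_i = t_inf and t_inf is a prefix of t_{i+1} (i.e., t_inf is the greatest common ancestor of t_i and t_{i+1} infinitely often). -/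
/-- if `ρ` is an infinite sequence of nodes of a finite labelled
tree such that each step either strictly decreases in `≺` or moves to a
descendant, then the `≺`-minimal node `tinf` occurring infinitely often in `ρ`
satisfies: for infinitely many `i`, `ρ i = tinf` and `tinf` is a prefix of
`ρ (i+1)` (so `tinf` is the greatest common ancestor of `ρ i` and `ρ (i+1)`
infinitely often). -/
theorem stmt5 {α : Type*} [LinearOrder α] (ρ : ℕ → List α)
    (hfin : (Set.range ρ).Finite)
    (hstep : ∀ j, nlt (ρ (j + 1)) (ρ j) ∨ ρ j <+: ρ (j + 1))
    (tinf : List α)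
    (hinf : ∀ N, ∃ i ≥ N, ρ i = tinf)
    (hmin : ∀ s, (∀ N, ∃ i ≥ N, ρ i = s) → ¬ nlt s tinf) :
    ∀ N, ∃ i ≥ N, ρ i = tinf ∧ tinf <+: ρ (i + 1) := by
  intro N
  by_contra h
  push_neg at h
  -- every occurrence i ≥ N of tinf is followed by a strict nlt-decrease
  have key : ∀ i, N ≤ i → ρ i = tinf → nlt (ρ (i + 1)) tinf := by
    intro i hi hρ
    rcases hstep i with h1 | h1
    · rwa [hρ] at h1
    · exact absurd (hρ ▸ h1) (h i hi hρ)
  set T : Set ℕ := {i | N ≤ i ∧ ρ i = tinf} with hT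
  have hTinf : T.Infinite := by
    apply Set.infinite_of_not_bddAbove
    rintro ⟨M, hM⟩
    obtain ⟨i, hi, hρ⟩ := hinf (max N (M + 1))
    have hmem : i ∈ T := ⟨le_trans (le_max_left _ _) hi, hρ⟩
    have := hM hmem
    have : M + 1 ≤ i := le_trans (le_max_right _ _) hi
    omega
  haveI := hTinf.to_subtype
  haveI := hfin.to_subtype
  have hmemr : ∀ i : T, ρ ((i : ℕ) + 1) ∈ Set.range ρ := fun i => ⟨(i : ℕ) + 1, rfl⟩
  set f : T → Set.range ρ := fun i => ⟨ρ ((i : ℕ) + 1), hmemr i⟩ with hf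
  obtain ⟨s, hs⟩ := Finite.exists_infinite_fiber f
  -- s.1 occurs infinitely often
  have hocc : ∀ M, ∃ j ≥ M, ρ j = s.1 := by
    intro M
    have : ((Subtype.val : T → ℕ) '' (f ⁻¹' {s})).Infinite := by
      exact Set.Infinite.image Subtype.val_injective.injOn (Set.infinite_coe_iff.mp hs)
    obtain ⟨j, hjmem, hj⟩ := this.exists_gt M
    obtain ⟨i, hi, rfl⟩ := hjmem
    refine ⟨(i : ℕ) + 1, by omega, ?_⟩
    have := hi
    simp only [Set.mem_preimage, Set.mem_singleton_iff] at this
    exact congrArg Subtype.val this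
  -- nlt s.1 tinf
  obtain ⟨i, hi⟩ := (Set.infinite_coe_iff.mp hs).nonempty
  have hs1 : ρ ((i : ℕ) + 1) = s.1 := congrArg Subtype.val hi
  have := key i i.2.1 i.2.2
  rw [hs1] at this
  exact hmin s.1 hocc this
end

section
/- For all ℓ ≥ 0 and k ≥ 1: the product n·k!·min(n·2^k, C(ℓ+k, k-1)) with n = 2^ℓ is an upper bound for U(ℓ, k-1), where U satisfies U(ℓ,0)=2^ℓ, U(0,0)=1, U(0,h)=h·U(0,h-1)+1 (h≥1), U(ℓ,h)=2·U(ℓ-1,h)+h·U(ℓ,h-1)+1 (ℓ,h≥1). That is, U(ℓ,k-1) ≤ 2^ℓ · k! · min(2^ℓ·2^k, C(ℓ+k, k-1)). -/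
/-- combining the two upper bounds, the leaf-count recurrence `U`
of the colourful universal tree satisfies
`U(ℓ, k-1) ≤ 2^ℓ · k! · min(2^ℓ·2^k, C(ℓ+k, k-1))` for all `ℓ ≥ 0`, `k ≥ 1`. -/
theorem stmt14 (U : ℕ → ℕ → ℕ)
    (h₀ : ∀ ℓ, U ℓ 0 = 2 ^ ℓ)
    (h₁ : U 0 0 = 1)
    (h₂ : ∀ h, 1 ≤ h → U 0 h = h * U 0 (h - 1) + 1)
    (h₃ : ∀ ℓ h, 1 ≤ ℓ → 1 ≤ h →
      U ℓ h = 2 * U (ℓ - 1) h + h * U ℓ (h - 1) + 1) :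
    ∀ ℓ k, 1 ≤ k →
      U ℓ (k - 1) ≤
        2 ^ ℓ * Nat.factorial k * min (2 ^ ℓ * 2 ^ k) (Nat.choose (ℓ + k) (k - 1)) := by
  -- Bound A: U ℓ h ≤ 4^ℓ * 2^(h+1) * (h+1)!
  have bA : ∀ ℓ h, U ℓ h ≤ 4 ^ ℓ * 2 ^ (h + 1) * Nat.factorial (h + 1) := by
    intro ℓ
    induction ℓ with
    | zero =>
      intro h
      induction h with
      | zero => simp [h₁]
      | succ n ih =>
        rw [h₂ (n + 1) (by omega)]
        simp only [Nat.add_sub_cancel, pow_zero, one_mul] at *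
        have hf : Nat.factorial (n + 2) = (n + 2) * Nat.factorial (n + 1) :=
          Nat.factorial_succ _
        have hp : (2:ℕ) ^ (n + 2) = 2 * 2 ^ (n + 1) := by ring
        have h1 : 1 ≤ 2 ^ (n + 1) * Nat.factorial (n + 1) :=
          Nat.one_le_iff_ne_zero.mpr (by positivity)
        calc (n + 1) * U 0 n + 1
            ≤ (n + 1) * (2 ^ (n + 1) * Nat.factorial (n + 1)) + 1 := by
              exact Nat.add_le_add_right (Nat.mul_le_mul_left _ ih) 1
          _ ≤ 2 * (n + 2) * (2 ^ (n + 1) * Nat.factorial (n + 1)) := by nlinarith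
          _ = 2 ^ (n + 2) * Nat.factorial (n + 2) := by rw [hf, hp]; ring
    | succ m ihm =>
      intro h
      induction h with
      | zero =>
        rw [h₀]
        calc (2:ℕ) ^ (m + 1) ≤ 4 ^ (m + 1) :=
              Nat.pow_le_pow_left (by norm_num) _
          _ ≤ 4 ^ (m + 1) * 2 ^ (0 + 1) * Nat.factorial (0 + 1) := by simp
      | succ n ihn =>
        rw [h₃ (m + 1) (n + 1) (by omega) (by omega)]
        simp only [Nat.add_sub_cancel]
        have iA := ihm (n + 1)
        have iB := ihn
        have hf : Nat.factorial (n + 2) = (n + 2) * Nat.factorial (n + 1) :=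
          Nat.factorial_succ _
        have h1 : 1 ≤ 4 ^ (m + 1) * 2 ^ (n + 1) * Nat.factorial (n + 1) :=
          Nat.one_le_iff_ne_zero.mpr (by positivity)
        have h4 : (4:ℕ) ^ (m + 1) = 2 * (2 * 4 ^ m) := by ring
        calc 2 * U m (n + 1) + (n + 1) * U (m + 1) n + 1
            ≤ 2 * (4 ^ m * 2 ^ (n + 2) * Nat.factorial (n + 2))
              + (n + 1) * (4 ^ (m + 1) * 2 ^ (n + 1) * Nat.factorial (n + 1)) + 1 := by
              gcongr
          _ ≤ 4 ^ (m + 1) * 2 ^ (n + 2) * Nat.factorial (n + 2) := by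
              have h1' : 1 ≤ 4 ^ m * 2 ^ (n + 1) * Nat.factorial (n + 1) :=
                Nat.one_le_iff_ne_zero.mpr (by positivity)
              rw [hf, show (4:ℕ) ^ (m + 1) = 4 * 4 ^ m from by ring,
                show (2:ℕ) ^ (n + 2) = 2 * 2 ^ (n + 1) from by ring]
              nlinarith [h1']
  -- Bound B: U ℓ h ≤ 2^ℓ * (h+1)! * C(ℓ+h+1, h)
  have bB : ∀ ℓ h, U ℓ h ≤ 2 ^ ℓ * Nat.factorial (h + 1) * Nat.choose (ℓ + h + 1) h := by
    intro ℓ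
    induction ℓ with
    | zero =>
      intro h
      induction h with
      | zero => simp [h₁]
      | succ n ih =>
        rw [h₂ (n + 1) (by omega)]
        simp only [Nat.add_sub_cancel, pow_zero, one_mul, Nat.zero_add] at *
        rw [Nat.choose_succ_self_right] at *
        have hf : Nat.factorial (n + 2) = (n + 2) * Nat.factorial (n + 1) :=
          Nat.factorial_succ _
        have h1 : 1 ≤ Nat.factorial (n + 1) := Nat.factorial_pos _
        calc (n + 1) * U 0 n + 1
            ≤ (n + 1) * (Nat.factorial (n + 1) * (n + 1)) + 1 := by
              exact Nat.add_le_add_right (Nat.mul_le_mul_left _ ih) 1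
          _ ≤ Nat.factorial (n + 2) * (n + 2) := by rw [hf]; nlinarith
    | succ m ihm =>
      intro h
      induction h with
      | zero =>
        rw [h₀]
        simp
      | succ n ihn =>
        rw [h₃ (m + 1) (n + 1) (by omega) (by omega)]
        simp only [Nat.add_sub_cancel]
        have iA := ihm (n + 1)
        have iB := ihn
        have pascal : Nat.choose (m + 1 + (n + 1) + 1) (n + 1)
            = Nat.choose (m + n + 2) n + Nat.choose (m + n + 2) (n + 1) := by
          have : m + 1 + (n + 1) + 1 = (m + n + 2) + 1 := by ring
          rw [this, Nat.choose_succ_succ]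
        have e1 : m + (n + 1) + 1 = m + n + 2 := by ring
        have e2 : m + 1 + n + 1 = m + n + 2 := by ring
        rw [e1] at iA
        rw [e2] at iB
        have hf : Nat.factorial (n + 2) = (n + 2) * Nat.factorial (n + 1) :=
          Nat.factorial_succ _
        have hc : 1 ≤ Nat.choose (m + n + 2) n := Nat.choose_pos (by omega)
        have h1 : 1 ≤ 2 ^ (m + 1) * Nat.factorial (n + 1) * Nat.choose (m + n + 2) n := by
          have : 1 ≤ 2 ^ (m + 1) * Nat.factorial (n + 1) :=
            Nat.one_le_iff_ne_zero.mpr (by positivity)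
          calc 1 ≤ 2 ^ (m + 1) * Nat.factorial (n + 1) := this
            _ ≤ _ := Nat.le_mul_of_pos_right _ hc
        calc 2 * U m (n + 1) + (n + 1) * U (m + 1) n + 1
            ≤ 2 * (2 ^ m * Nat.factorial (n + 2) * Nat.choose (m + n + 2) (n + 1))
              + (n + 1) * (2 ^ (m + 1) * Nat.factorial (n + 1) * Nat.choose (m + n + 2) n)
              + 1 := by gcongr
          _ ≤ 2 ^ (m + 1) * Nat.factorial (n + 2)
              * (Nat.choose (m + n + 2) n + Nat.choose (m + n + 2) (n + 1)) := by
              have h1' : 1 ≤ 2 ^ m * Nat.factorial (n + 1) * Nat.choose (m + n + 2) n := by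
                have : 1 ≤ 2 ^ m * Nat.factorial (n + 1) :=
                  Nat.one_le_iff_ne_zero.mpr (by positivity)
                exact le_trans this (Nat.le_mul_of_pos_right _ hc)
              rw [hf, show (2:ℕ) ^ (m + 1) = 2 * 2 ^ m from by ring]
              nlinarith [h1']
          _ = 2 ^ (m + 1) * Nat.factorial (n + 2)
              * Nat.choose (m + 1 + (n + 1) + 1) (n + 1) := by rw [pascal]
  intro ℓ k hk
  obtain ⟨h, rfl⟩ : ∃ h, k = h + 1 := ⟨k - 1, by omega⟩
  simp only [Nat.add_sub_cancel]
  rcases le_total (2 ^ ℓ * 2 ^ (h + 1)) (Nat.choose (ℓ + (h + 1)) h) with hm | hm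
  · rw [min_eq_left hm]
    calc U ℓ h ≤ 4 ^ ℓ * 2 ^ (h + 1) * Nat.factorial (h + 1) := bA ℓ h
      _ = 2 ^ ℓ * Nat.factorial (h + 1) * (2 ^ ℓ * 2 ^ (h + 1)) := by
          rw [show (4:ℕ) = 2 * 2 from rfl, mul_pow]; ring
  · rw [min_eq_right hm]
    have := bB ℓ h
    calc U ℓ h ≤ 2 ^ ℓ * Nat.factorial (h + 1) * Nat.choose (ℓ + h + 1) h := bB ℓ h
      _ = 2 ^ ℓ * Nat.factorial (h + 1) * Nat.choose (ℓ + (h + 1)) h := by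
          rw [show ℓ + h + 1 = ℓ + (h + 1) from by ring]
end

section
/- Under the assumptions of the lifting framework for Rabin games, the operator Lift_v is monotone: if μ₁ ⪯ μ₂ pointwise (as maps from vertices to the linearly ordered set of tree nodes with top element ⊤), then Lift_v(μ₁) ⪯ Lift_v(μ₂) pointwise. -/
/-- The order `≺` extended to `L ∪ {⊤}`, where `none` plays the role of the
top element `⊤`. -/
def oLt {σ : Type*} [LinearOrder σ] : Option (List σ) → Option (List σ) → Prop
  | some a, some b => nlt a b
  | some _, none => True
  | none, _ => False

/-- The reflexive closure `⪯` of the order on `L ∪ {⊤}`. -/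
def oLe {σ : Type*} [LinearOrder σ] (x y : Option (List σ)) : Prop :=
  oLt x y ∨ x = y

/-- The colour of a node: the colour of its last element, and the root colour
`c₀` for the empty sequence (`none` denotes the dummy colour `⊥`). -/
def colourOf {σ γ : Type*} (c₀ : γ) (col : σ → Option γ) (t : List σ) : Option γ :=
  match t.getLast? with
  | none => some c₀
  | some s => col s

/-- `c` belongs to the colour set of `t`: some prefix of `t` has colour `c`. -/
def inColourSet {σ γ : Type*} (c₀ : γ) (col : σ → Option γ) (c : γ)
    (t : List σ) : Prop :=
  ∃ p, p <+: t ∧ colourOf c₀ col p = some c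

/-- Consistency of the edge `u → v` under `μ : V → L ∪ {⊤}`: either
`μ(u) = ⊤`, or (`μ(u) ≻ μ(v)`, or `μ(u)` is an ancestor of `μ(v)` and the
colour of `μ(u)` is a good colour of `u`), and no bad colour of `u` is in the
colour set of `μ(u)`. -/
def EdgeCons {V σ γ : Type*} [LinearOrder σ] (c₀ : γ) (col : σ → Option γ)
    (G B : V → Set γ) (μ : V → Option (List σ)) (u v : V) : Prop :=
  μ u = none ∨
    ∃ tu, μ u = some tu ∧
      (oLt (μ v) (μ u) ∨
        (∃ tv, μ v = some tv ∧ tu <+: tv ∧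
          ∃ c, colourOf c₀ col tu = some c ∧ c ∈ G u)) ∧
      ∀ c ∈ B u, ¬ inColourSet c₀ col c tu


section Stmt16Aux

variable {V σ γ : Type*} [DecidableEq V] [LinearOrder σ]

lemma nlt_iff_lt (l₁ l₂ : List σ) : nlt l₁ l₂ ↔ l₁ < l₂ := by
  constructor
  · rintro (⟨⟨t, rfl⟩, hne⟩ | h)
    · cases t with
      | nil => simp at hne
      | cons a t => simpa using List.Lex.append_left _ (List.nil_lt_cons a t) l₁
    · exact h
  · exact Or.inr

lemma key_prefix :
    ∀ (tu tv₁ tv₂ : List σ), tu <+: tv₂ → List.Lex (· < ·) tu tv₁ →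
      List.Lex (· < ·) tv₁ tv₂ → tu <+: tv₁
  | [], _, _, _, _, _ => List.nil_prefix
  | a :: tu', tv₁, tv₂, hp, h1, h2 => by
    obtain ⟨t, rfl⟩ := hp
    cases h1 with
    | rel hab =>
      cases h2 with
      | rel hba => exact absurd (hab.trans hba) (lt_irrefl a)
      | cons _ => exact absurd hab (lt_irrefl a)
    | cons h1' =>
      cases h2 with
      | rel hba => exact absurd hba (lt_irrefl a)
      | cons h2' =>
        exact List.cons_prefix_cons.mpr ⟨rfl, key_prefix tu' _ _ ⟨t, by simp⟩ h1' h2'⟩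

lemma oLt_trans {a b c : Option (List σ)} (h1 : oLt a b) (h2 : oLt b c) : oLt a c := by
  match a, b, c with
  | some a, some b, some c =>
    exact (nlt_iff_lt a c).mpr (((nlt_iff_lt a b).mp h1).trans ((nlt_iff_lt b c).mp h2))
  | some _, some _, none => trivial
  | some _, none, _ => cases h2
  | none, _, _ => cases h1

lemma oLe_trans {a b c : Option (List σ)} (h1 : oLe a b) (h2 : oLe b c) : oLe a c := by
  rcases h1 with h1 | rfl
  · rcases h2 with h2 | rfl
    · exact Or.inl (oLt_trans h1 h2)
    · exact Or.inl h1
  · exact h2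

/-- The sub-lemma: if `tu` is a prefix of `tv₂` and `tv₁ ≺ tv₂`, then
`tu` is a prefix of `tv₁` or `tv₁ ≺ tu`. -/
lemma prefix_or_nlt {tu tv₁ tv₂ : List σ} (hp : tu <+: tv₂) (h : nlt tv₁ tv₂) :
    tu <+: tv₁ ∨ nlt tv₁ tu := by
  rcases lt_trichotomy tv₁ tu with h' | rfl | h'
  · exact Or.inr ((nlt_iff_lt _ _).mpr h')
  · exact Or.inl (List.prefix_refl _)
  · exact Or.inl (key_prefix tu tv₁ tv₂ hp h' ((nlt_iff_lt _ _).mp h))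

/-- Monotonicity of the consistency condition in the value at the target
vertex. -/
lemma edgeCons_mono {c₀ : γ} {col : σ → Option γ} {G B : V → Set γ}
    {μ₁ μ₂ : V → Option (List σ)} {v w : V} (hw : oLe (μ₁ w) (μ₂ w))
    (hv : μ₁ v = μ₂ v) (h : EdgeCons c₀ col G B μ₂ v w) :
    EdgeCons c₀ col G B μ₁ v w := by
  rcases h with h | ⟨tu, htu, hcond, hbad⟩
  · exact Or.inl (hv.trans h)
  · refine Or.inr ⟨tu, hv.trans htu, ?_, hbad⟩
    rcases hw with hw | hw
    · rw [hv, htu]; rw [htu] at hcond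
      rcases hcond with hcond | ⟨tv, htv, hpre, hc⟩
      · left
        exact oLt_trans hw hcond
      · rw [htv] at hw
        match h1 : μ₁ w with
        | none => cases (h1 ▸ hw : oLt none (some tv))
        | some tv₁ =>
          rcases prefix_or_nlt hpre (h1 ▸ hw : oLt (some tv₁) (some tv)) with hh | hh
          · exact Or.inr ⟨tv₁, rfl, hh, hc⟩
          · exact Or.inl hh
    · rw [hw, hv]
      exact hcond

end Stmt16Aux

/-- the operator `Lift_v` is monotone: if `μ₁ ⪯ μ₂` pointwise,
then `Lift_v(μ₁) ⪯ Lift_v(μ₂)` pointwise. The specifications of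
`liftf` (least consistent value) and `Liftv` (min/max over outgoing edges)
are as in the lifting framework. -/
theorem stmt16 {V σ γ : Type*} [DecidableEq V] [LinearOrder σ]
    (E : V → V → Prop) (hE : ∀ v, ∃ w, E v w)
    (Vc : Set V)
    (c₀ : γ) (col : σ → Option γ) (G B : V → Set γ)
    (liftf : (V → Option (List σ)) → V → V → Option (List σ))
    (hlift : ∀ μ v w, E v w →
      oLe (μ v) (liftf μ v w) ∧
      EdgeCons c₀ col G B (Function.update μ v (liftf μ v w)) v w ∧
      ∀ t, oLe (μ v) t → EdgeCons c₀ col G B (Function.update μ v t) v w →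
        oLe (liftf μ v w) t)
    (Liftv : (V → Option (List σ)) → V → (V → Option (List σ)))
    (hLift : ∀ μ v,
      (∀ u, u ≠ v → Liftv μ v u = μ u) ∧
      (v ∈ Vc → ∃ w, E v w ∧ Liftv μ v v = liftf μ v w ∧
        ∀ w', E v w' → oLe (Liftv μ v v) (liftf μ v w')) ∧
      (v ∉ Vc → ∃ w, E v w ∧ Liftv μ v v = liftf μ v w ∧
        ∀ w', E v w' → oLe (liftf μ v w') (Liftv μ v v)))
    (μ₁ μ₂ : V → Option (List σ)) (hμ : ∀ u, oLe (μ₁ u) (μ₂ u)) (v : V) :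
    ∀ u, oLe (Liftv μ₁ v u) (Liftv μ₂ v u) := by
  have H1 := hLift μ₁ v
  have H2 := hLift μ₂ v
  -- monotonicity of liftf
  have hliftmono : ∀ w, E v w → oLe (liftf μ₁ v w) (liftf μ₂ v w) := by
    intro w hw
    obtain ⟨hle₁, hcons₁, hmin₁⟩ := hlift μ₁ v w hw
    obtain ⟨hle₂, hcons₂, hmin₂⟩ := hlift μ₂ v w hw
    apply hmin₁ (liftf μ₂ v w) (oLe_trans (hμ v) hle₂)
    refine edgeCons_mono ?_ ?_ hcons₂
    · by_cases hwv : w = v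
      · subst hwv; simp [Function.update_self]; exact Or.inr rfl
      · simpa [Function.update_of_ne hwv] using hμ w
    · simp [Function.update_self]
  intro u
  by_cases huv : u = v
  · subst huv
    by_cases hvc : u ∈ Vc
    · obtain ⟨w, hw, heq, hmin⟩ := H2.2.1 hvc
      have := H1.2.1 hvc
      obtain ⟨w₁, hw₁, heq₁, hmin₁⟩ := this
      rw [heq]
      exact oLe_trans (hmin₁ w hw) (hliftmono w hw)
    · obtain ⟨w, hw, heq, hmax⟩ := H1.2.2 hvc
      obtain ⟨w₂, hw₂, heq₂, hmax₂⟩ := H2.2.2 hvc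
      rw [heq]
      exact oLe_trans (hliftmono w hw) (hmax₂ w hw)
  · rw [H1.1 u huv, H2.1 u huv]
    exact hμ u
end

section
/- A map μ : V → L∪{⊤} is a simultaneous fixpoint of the family of operators (Lift_v)_{v∈V} if and only if every vertex is consistent with respect to μ (i.e., μ is a Rabin measure for the game): Environment vertices have all outgoing edges consistent and Controller vertices have at least one consistent outgoing edge. -/
lemma prefix_lex {α : Type*} [LinearOrder α] :
    ∀ {a b : List α}, a <+: b → a ≠ b → List.Lex (· < ·) a b
  | [], [], _, hne => absurd rfl hne
  | [], _ :: _, _, _ => List.Lex.nil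
  | _ :: _, [], h, _ => absurd h (by simp)
  | x :: a, y :: b, h, hne => by
      obtain ⟨rfl, h2⟩ := List.cons_prefix_cons.mp h
      exact List.Lex.cons (prefix_lex h2 (fun e => hne (by rw [e])))

lemma nlt_iff {α : Type*} [LinearOrder α] {a b : List α} :
    nlt a b ↔ List.Lex (· < ·) a b :=
  ⟨fun h => h.elim (fun ⟨h1, h2⟩ => prefix_lex h1 h2) id, Or.inr⟩

lemma oLt_asymm {σ : Type*} [LinearOrder σ] {x y : Option (List σ)}
    (h1 : oLt x y) (h2 : oLt y x) : False := by
  cases x <;> cases y <;> simp [oLt, nlt_iff] at *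
  exact asymm h1 h2

lemma oLt_trans_s17 {σ : Type*} [LinearOrder σ] {x y z : Option (List σ)}
    (h1 : oLt x y) (h2 : oLt y z) : oLt x z := by
  cases x <;> cases y <;> cases z <;> simp [oLt, nlt_iff] at *
  exact _root_.trans h1 h2

lemma oLe_antisymm {σ : Type*} [LinearOrder σ] {x y : Option (List σ)}
    (h1 : oLe x y) (h2 : oLe y x) : x = y := by
  rcases h1 with h1 | rfl
  · rcases h2 with h2 | rfl
    · exact absurd h1 (fun h => oLt_asymm h h2)
    · rfl
  · rfl

lemma oLe_trans_s17 {σ : Type*} [LinearOrder σ] {x y z : Option (List σ)}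
    (h1 : oLe x y) (h2 : oLe y z) : oLe x z := by
  rcases h1 with h1 | rfl
  · rcases h2 with h2 | rfl
    · exact Or.inl (oLt_trans_s17 h1 h2)
    · exact Or.inl h1
  · exact h2

/-- `μ` is a simultaneous fixpoint of the operators
`(Lift_v)_{v ∈ V}` if and only if every vertex is consistent with respect to
`μ` (i.e. `μ` is a Rabin measure): every Controller vertex (`v ∈ Vc`) has at
least one consistent outgoing edge, and every Environment vertex has all
outgoing edges consistent. -/
theorem stmt17 {V σ γ : Type*} [DecidableEq V] [LinearOrder σ]
    (E : V → V → Prop) (hE : ∀ v, ∃ w, E v w)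
    (Vc : Set V)
    (c₀ : γ) (col : σ → Option γ) (G B : V → Set γ)
    (liftf : (V → Option (List σ)) → V → V → Option (List σ))
    (hlift : ∀ μ v w, E v w →
      oLe (μ v) (liftf μ v w) ∧
      EdgeCons c₀ col G B (Function.update μ v (liftf μ v w)) v w ∧
      ∀ t, oLe (μ v) t → EdgeCons c₀ col G B (Function.update μ v t) v w →
        oLe (liftf μ v w) t)
    (Liftv : (V → Option (List σ)) → V → (V → Option (List σ)))
    (hLift : ∀ μ v,
      (∀ u, u ≠ v → Liftv μ v u = μ u) ∧
      (v ∈ Vc → ∃ w, E v w ∧ Liftv μ v v = liftf μ v w ∧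
        ∀ w', E v w' → oLe (Liftv μ v v) (liftf μ v w')) ∧
      (v ∉ Vc → ∃ w, E v w ∧ Liftv μ v v = liftf μ v w ∧
        ∀ w', E v w' → oLe (liftf μ v w') (Liftv μ v v)))
    (μ : V → Option (List σ)) :
    (∀ v, Liftv μ v = μ) ↔
      (∀ v, (v ∈ Vc → ∃ w, E v w ∧ EdgeCons c₀ col G B μ v w) ∧
        (v ∉ Vc → ∀ w, E v w → EdgeCons c₀ col G B μ v w)) := by
  constructor
  · intro hfix v
    have hfv : Liftv μ v v = μ v := congrFun (hfix v) v
    have key : ∀ w, E v w → liftf μ v w = Liftv μ v v → EdgeCons c₀ col G B μ v w := by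
      intro w hEw hlw
      have hec := (hlift μ v w hEw).2.1
      rw [hlw, hfv, Function.update_eq_self] at hec
      exact hec
    refine ⟨fun hvc => ?_, fun hvn w hEw => ?_⟩
    · obtain ⟨w, hEw, heq, _⟩ := (hLift μ v).2.1 hvc
      exact ⟨w, hEw, key w hEw heq.symm⟩
    · obtain ⟨w₀, hEw₀, heq, hmax⟩ := (hLift μ v).2.2 hvn
      have h1 : oLe (μ v) (liftf μ v w) := (hlift μ v w hEw).1
      have h2 : oLe (liftf μ v w) (μ v) := hfv ▸ hmax w hEw
      have hlw : liftf μ v w = μ v := (oLe_antisymm h1 h2).symm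
      have hec := (hlift μ v w hEw).2.1
      rw [hlw, Function.update_eq_self] at hec
      exact hec
  · intro hcons v
    funext u
    by_cases hu : u = v
    · subst hu
      by_cases hvc : u ∈ Vc
      · obtain ⟨w, hEw, hEc⟩ := (hcons u).1 hvc
        obtain ⟨w₀, hEw₀, heq, hmin⟩ := (hLift μ u).2.1 hvc
        have h3 : oLe (liftf μ u w) (μ u) :=
          (hlift μ u w hEw).2.2 (μ u) (Or.inr rfl)
            (by rw [Function.update_eq_self]; exact hEc)
        have h4 : oLe (Liftv μ u u) (liftf μ u w) := hmin w hEw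
        have h5 : oLe (μ u) (Liftv μ u u) := heq ▸ (hlift μ u w₀ hEw₀).1
        exact oLe_antisymm (oLe_trans_s17 h4 h3) h5
      · obtain ⟨w₀, hEw₀, heq, hmax⟩ := (hLift μ u).2.2 hvc
        have hEc := (hcons u).2 hvc w₀ hEw₀
        have h3 : oLe (liftf μ u w₀) (μ u) :=
          (hlift μ u w₀ hEw₀).2.2 (μ u) (Or.inr rfl)
            (by rw [Function.update_eq_self]; exact hEc)
        have h5 : oLe (μ u) (liftf μ u w₀) := (hlift μ u w₀ hEw₀).1
        rw [heq]
        exact oLe_antisymm h3 h5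
    · exact (hLift μ v).1 u hu
end

section
/- If a finite directed Rabin graph G (every vertex has an outgoing edge) admits a Rabin measure μ : V → L into (the node set of) an L-labelled (c₀,C)-colourful tree with no vertex mapped to ⊤, then every infinite path v₀ → v₁ → v₂ → ⋯ in G satisfies the Rabin condition: there exists a colour c ∈ C ∪ {c₀} such that c ∈ G_v for infinitely many v on the path and c ∉ B_v for all v occurring infinitely often on the path. -/
private lemma lex_append_aux {α : Type*} (r : α → α → Prop) :
    ∀ (l s : List α), s ≠ [] → List.Lex r l (l ++ s)
  | [], [], h => absurd rfl h
  | [], _ :: _, _ => List.Lex.nil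
  | _ :: l, s, h => List.Lex.cons (lex_append_aux r l s h)

private lemma lex_of_prefix_ne {α : Type*} [LinearOrder α] {l₁ l₂ : List α}
    (h : l₁ <+: l₂) (hne : l₁ ≠ l₂) : List.Lex (· < ·) l₁ l₂ := by
  obtain ⟨s, rfl⟩ := h
  refine lex_append_aux _ _ _ ?_
  rintro rfl
  simp at hne

private lemma prefix_of_sandwich {α : Type*} [LinearOrder α] :
    ∀ (t x y : List α), t <+: y → ¬ List.Lex (· < ·) x t →
      List.Lex (· < ·) x y → t <+: x
  | [], x, _, _, _, _ => List.nil_prefix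
  | _ :: _, [], _, _, hxt, _ => absurd List.Lex.nil hxt
  | a :: t, b :: x, y, hty, hxt, hxy => by
    obtain ⟨s, rfl⟩ := hty
    cases hxy with
    | rel h => exact absurd (List.Lex.rel h) hxt
    | cons h =>
      have ht : t <+: x := prefix_of_sandwich t x (t ++ s) ⟨s, rfl⟩
        (fun hxt' => hxt (List.Lex.cons hxt')) h
      obtain ⟨s', rfl⟩ := ht
      exact ⟨s', rfl⟩

/-- if a finite Rabin graph (every vertex has an outgoing edge)
admits a Rabin measure `μ` into the nodes of a labelled colourful tree with no
vertex mapped to `⊤`, then every infinite path satisfies the Rabin condition: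
some colour is good for a vertex occurring infinitely often on the path and
bad for no vertex occurring infinitely often. -/
theorem stmt18 {V σ γ : Type*} [Fintype V] [LinearOrder σ]
    (E : V → V → Prop) (hE : ∀ v, ∃ w, E v w)
    (c₀ : γ) (col : σ → Option γ)
    (G B : V → Set γ) (hB : ∀ v, c₀ ∉ B v)
    (μ : V → List σ)
    -- in the labelled tree, nodes coloured `⊥` are leaves:
    (hbot : ∀ v p, p <+: μ v → colourOf c₀ col p = none → p = μ v)
    -- along any node, the colours of its prefixes are pairwise distinct:
    (hdist : ∀ v p q, p <+: μ v → q <+: μ v →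
      colourOf c₀ col p = colourOf c₀ col q → p = q)
    -- `μ` is a Rabin measure: every edge is consistent:
    (hmeas : ∀ u v, E u v →
      (nlt (μ v) (μ u) ∨
        (μ u <+: μ v ∧ ∃ c, colourOf c₀ col (μ u) = some c ∧ c ∈ G u)) ∧
      ∀ c ∈ B u, ¬ inColourSet c₀ col c (μ u))
    (π : ℕ → V) (hπ : ∀ i, E (π i) (π (i + 1))) :
    ∃ c : γ,
      (∃ v : V, (∀ N, ∃ i ≥ N, π i = v) ∧ c ∈ G v) ∧
      (∀ v : V, (∀ N, ∃ i ≥ N, π i = v) → c ∉ B v) := by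
  classical
  set I : Set V := {v | ∀ N, ∃ i ≥ N, π i = v} with hI
  have key : ∀ v : V, v ∉ I → ∃ N, ∀ i ≥ N, π i ≠ v := by
    intro v hv
    simp only [hI, Set.mem_setOf_eq] at hv
    push_neg at hv
    exact hv
  set N₀ : ℕ := Finset.univ.sup (fun v => if h : v ∈ I then 0 else (key v h).choose)
    with hN₀
  have hrec : ∀ i, N₀ ≤ i → π i ∈ I := by
    intro i hi
    by_contra h
    have hle : (key (π i) h).choose ≤ N₀ := by
      have := Finset.le_sup (f := fun v => if h : v ∈ I then 0 else (key v h).choose)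
        (Finset.mem_univ (π i))
      simpa only [dif_neg h] using this
    exact (key (π i) h).choose_spec i (le_trans hle hi) rfl
  have hne : (Finset.univ.filter (fun v => v ∈ I)).Nonempty :=
    ⟨π N₀, by simp [hrec N₀ le_rfl]⟩
  obtain ⟨v₀, hv₀mem, hmin⟩ := Finset.exists_min_image _ μ hne
  have hv₀I : v₀ ∈ I := by simpa using hv₀mem
  have hminI : ∀ w ∈ I, ¬ List.Lex (· < ·) (μ w) (μ v₀) := by
    intro w hw hlex
    have hle : μ v₀ ≤ μ w := hmin w (by simpa using hw)
    exact absurd (show μ w < μ v₀ from hlex) (not_lt_of_ge hle)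
  obtain ⟨i₀, hi₀N, hi₀⟩ := hv₀I N₀
  have hedge := (hmeas (π i₀) (π (i₀ + 1)) (hπ i₀)).1
  rw [hi₀] at hedge
  have hIi1 : π (i₀ + 1) ∈ I := hrec _ (le_trans hi₀N (Nat.le_succ i₀))
  rcases hedge with h | ⟨hpre, c, hcol, hcG⟩
  · exfalso
    rcases h with ⟨hp, hne'⟩ | hlex
    · exact hminI _ hIi1 (lex_of_prefix_ne hp hne')
    · exact hminI _ hIi1 hlex
  have hinv : ∀ i, i₀ ≤ i → μ v₀ <+: μ (π i) := by
    intro i hi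
    induction i with
    | zero =>
      have : i₀ = 0 := Nat.le_zero.mp hi
      rw [← this, hi₀]
    | succ n ih =>
      rcases Nat.lt_or_ge i₀ (n + 1) with h | h
      · have hn : i₀ ≤ n := Nat.lt_succ_iff.mp h
        have hpn := ih hn
        have hIn1 : π (n + 1) ∈ I :=
          hrec _ (le_trans hi₀N (le_trans hn (Nat.le_succ n)))
        rcases (hmeas (π n) (π (n + 1)) (hπ n)).1 with hlt | ⟨hp, _⟩
        · have hlex : List.Lex (· < ·) (μ (π (n + 1))) (μ (π n)) := by
            rcases hlt with ⟨hp, hne'⟩ | hl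
            · exact lex_of_prefix_ne hp hne'
            · exact hl
          exact prefix_of_sandwich _ _ _ hpn (hminI _ hIn1) hlex
        · exact hpn.trans hp
      · have : i₀ = n + 1 := le_antisymm hi h
        rw [← this, hi₀]
  refine ⟨c, ⟨v₀, hv₀I, hcG⟩, ?_⟩
  intro w hw hcB
  obtain ⟨j, hj, hjw⟩ := hw i₀
  subst hjw
  exact (hmeas (π j) (π (j + 1)) (hπ j)).2 c hcB ⟨μ v₀, hinv j hj, hcol⟩
end
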